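/- arXiv:1410.2940 — 2 statements merged into one kernel-verified Lean document; each statement's English description precedes it below -/
import Mathlib

section
/- The alliance polynomial of the path graph P_n on n ≥ 2 vertices is A(P_n;x) = (n−2)x^{n−2} + 2x^{n−1} + ((n−2)(n+1)/2)·x^n + x^{n+1}. -/
open Finset Polynomial
open scoped Classical

noncomputable section

variable {V : Type*} [Fintype V]

/-- Number of neighbors of `v` inside `S` (as an integer). -/
def degIn (G : SimpleGraph V) (S : Finset V) (v : V) : ℤ :=
  ((S.filter (fun u => G.Adj v u)).card : ℤ)

/-- Number of neighbors of `v` outside `S` (as an integer). -/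
def degOut (G : SimpleGraph V) (S : Finset V) (v : V) : ℤ :=
  ((Sᶜ.filter (fun u => G.Adj v u)).card : ℤ)

/-- The exact index of alliance of `S`. -/
def exactIndex (G : SimpleGraph V) (S : Finset V) : ℤ :=
  if h : S.Nonempty then S.inf' h (fun v => degIn G S v - degOut G S v) else 0

/-- Nonempty vertex subsets inducing a connected subgraph. -/
def goodSets (G : SimpleGraph V) : Finset (Finset V) :=
  Finset.univ.filter (fun S => S.Nonempty ∧ (G.induce (S : Set V)).Connected)

/-- The alliance polynomial. -/
def alliancePoly (G : SimpleGraph V) : Polynomial ℤ :=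
  ∑ S ∈ goodSets G, X ^ (((Fintype.card V : ℤ) + exactIndex G S).toNat)

/-- `A_k(Γ)`: number of connected exact defensive `k`-alliances. -/
def allianceCount (G : SimpleGraph V) (k : ℤ) : ℕ :=
  ((goodSets G).filter (fun S => exactIndex G S = k)).card

end

/-! The connected vertex sets of `P_n` are exactly the intervals `[a, b]`. For `v ∈ [a, b]` one has
`δ_S(v) - δ_{S̄}(v) = 2 δ_S(v) - δ(v)`, and both degrees are explicit, so the exact index of an
interval is `-1` for a single end vertex of the path, `-2` for a single inner vertex, `1` for the
whole path, and `0` for every other interval with at least two vertices: there the minimum is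
attained at an end of the interval that is not an end of the path. There are `2` end vertices,
`n - 2` inner vertices, one whole path, and `C(n, 2) - 1 = (n - 2)(n + 1) / 2` remaining intervals. -/

open SimpleGraph

theorem mem_of_walk_pathGraph_induce {n : ℕ} {S : Set (Fin n)} {x y : S}
    (p : ((pathGraph n).induce S).Walk x y) {c : Fin n} (hxc : x.1 ≤ c) (hcy : c ≤ y.1) :
    c ∈ S := by
  induction p with
  | nil => exact le_antisymm hcy hxc ▸ Subtype.property _
  | @cons u w _ huw _ ih =>
    by_cases hwc : w.1 ≤ c
    · exact ih hwc hcy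
    · have huw : (pathGraph n).Adj u.1 w.1 := huw
      rw [pathGraph_adj] at huw
      rw [Fin.le_def] at hxc
      rw [not_le, Fin.lt_def] at hwc
      exact (Fin.ext (by omega) : c = u.1) ▸ u.2

theorem connected_induce_pathGraph_Icc {n : ℕ} {a b : Fin n} (hab : a ≤ b) :
    ((pathGraph n).induce (Set.Icc a b)).Connected := by
  rw [Fin.le_def] at hab
  have hb := b.isLt
  let f : pathGraph (b - a + 1) →g (pathGraph n).induce (Set.Icc a b) :=
    { toFun := fun i => ⟨⟨a + i, by omega⟩, by simp only [Set.mem_Icc, Fin.le_def]; omega⟩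
      map_rel' := fun h => by
        simp only [comap_adj, Function.Embedding.subtype_apply, pathGraph_adj] at h ⊢
        omega }
  refine (pathGraph_connected _).map f fun ⟨c, hc⟩ => ?_
  rw [Set.mem_Icc, Fin.le_def, Fin.le_def] at hc
  refine ⟨⟨c - a, by omega⟩, Subtype.ext (Fin.ext ?_)⟩
  simp only [RelHom.coeFn_mk, f]
  omega

theorem mem_goodSets_pathGraph_iff {n : ℕ} {S : Finset (Fin n)} :
    S ∈ goodSets (pathGraph n) ↔ ∃ a b, a ≤ b ∧ S = Icc a b := by
  simp only [goodSets, mem_filter, mem_univ, true_and]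
  constructor
  · rintro ⟨hne, hconn⟩
    refine ⟨S.min' hne, S.max' hne, min'_le _ _ (max'_mem _ _), ?_⟩
    refine Subset.antisymm (fun c hc => mem_Icc.mpr ⟨min'_le _ _ hc, le_max' _ _ hc⟩)
      fun c hc => ?_
    rw [mem_Icc] at hc
    obtain ⟨p⟩ :=
      hconn.preconnected ⟨_, mem_coe.mpr (min'_mem S hne)⟩ ⟨_, mem_coe.mpr (max'_mem S hne)⟩
    exact mem_of_walk_pathGraph_induce p hc.1 hc.2
  · rintro ⟨a, b, hab, rfl⟩
    rw [coe_Icc]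
    exact ⟨nonempty_Icc.mpr hab, connected_induce_pathGraph_Icc hab⟩

theorem sum_goodSets_pathGraph {M : Type*} [AddCommMonoid M] {n : ℕ} (f : Finset (Fin n) → M) :
    ∑ S ∈ goodSets (pathGraph n), f S =
      ∑ a, f {a} + ∑ p : Fin n × Fin n with p.1 < p.2, f (Icc p.1 p.2) := by
  have hsplit : goodSets (pathGraph n) =
      univ.image (fun a => {a}) ∪
        ({p : Fin n × Fin n | p.1 < p.2} : Finset _).image (fun p => Icc p.1 p.2) := by
    ext S
    simp only [mem_goodSets_pathGraph_iff, mem_union, mem_image, mem_univ, true_and, mem_filter]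
    constructor
    · rintro ⟨a, b, hab, rfl⟩
      rcases hab.eq_or_lt with rfl | hab
      · exact Or.inl ⟨a, (Icc_self a).symm⟩
      · exact Or.inr ⟨(a, b), hab, rfl⟩
    · rintro (⟨a, rfl⟩ | ⟨p, hp, rfl⟩)
      · exact ⟨a, a, le_rfl, (Icc_self a).symm⟩
      · exact ⟨p.1, p.2, hp.le, rfl⟩
  rw [hsplit, sum_union, sum_image (fun a _ b _ => singleton_inj.mp), sum_image]
  · intro p hp q _ h
    rw [mem_coe, mem_filter] at hp
    rw [← coe_inj, coe_Icc, coe_Icc, Set.Icc_eq_Icc_iff hp.2.le] at h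
    exact Prod.ext h.1 h.2
  · simp only [Finset.disjoint_left, mem_image, mem_univ, true_and, mem_filter, not_exists,
      not_and]
    rintro _ ⟨a, rfl⟩ p hp h
    rw [Icc_eq_singleton_iff] at h
    exact hp.ne (h.1.trans h.2.symm)

theorem degIn_add_degOut {V : Type*} [Fintype V] (G : SimpleGraph V) (S : Finset V) (v : V) :
    degIn G S v + degOut G S v = G.degree v := by
  rw [degIn, degOut, ← Nat.cast_add,
    ← card_union_of_disjoint (disjoint_filter_filter disjoint_compl_right), ← filter_union,
    union_compl, ← card_neighborFinset_eq_degree, neighborFinset_eq_filter]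

theorem Nat.card_filter_adjacent_Icc {a b v : ℕ} (hav : a ≤ v) (hvb : v ≤ b) :
    #{u ∈ Icc a b | v + 1 = u ∨ u + 1 = v} = min b (v + 1) - max a (v - 1) := by
  have : {u ∈ Icc a b | v + 1 = u ∨ u + 1 = v} = Icc (max a (v - 1)) (min b (v + 1)) \ {v} := by
    ext u
    simp only [mem_filter, mem_Icc, mem_sdiff, mem_singleton]
    omega
  rw [this, card_sdiff_of_subset (singleton_subset_iff.mpr (mem_Icc.mpr (by omega))),
    Nat.card_Icc, card_singleton]
  omega

theorem card_filter_pathGraph_adj {n : ℕ} (T : Finset (Fin n)) (v : Fin n) :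
    #{u ∈ T | (pathGraph n).Adj v u} =
      #{u ∈ T.map Fin.valEmbedding | (v : ℕ) + 1 = u ∨ u + 1 = v} := by
  rw [filter_map, card_map]
  congr 1
  exact filter_congr fun u _ => pathGraph_adj

theorem degIn_pathGraph_Icc {n : ℕ} {a b v : Fin n} (hv : v ∈ Icc a b) :
    degIn (pathGraph n) (Icc a b) v =
      ((min (b : ℕ) (v + 1) - max (a : ℕ) (v - 1) : ℕ) : ℤ) := by
  rw [mem_Icc, Fin.le_def, Fin.le_def] at hv
  rw [degIn, card_filter_pathGraph_adj, Fin.map_valEmbedding_Icc,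
    Nat.card_filter_adjacent_Icc hv.1 hv.2]

theorem degree_pathGraph {n : ℕ} (v : Fin n) :
    (pathGraph n).degree v = min (n - 1) (v + 1) - (v - 1) := by
  have hv := v.isLt
  have huniv : (univ : Finset (Fin n)) = Icc ⟨0, by omega⟩ ⟨n - 1, by omega⟩ := by
    ext u; simp only [mem_univ, mem_Icc, Fin.le_def, true_iff]; omega
  rw [← card_neighborFinset_eq_degree, neighborFinset_eq_filter, card_filter_pathGraph_adj, huniv,
    Fin.map_valEmbedding_Icc,
    Nat.card_filter_adjacent_Icc (Nat.zero_le _) (Nat.le_sub_one_of_lt v.isLt)]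
  simp

theorem degIn_sub_degOut_pathGraph_Icc {n : ℕ} {a b v : Fin n} (hv : v ∈ Icc a b) :
    degIn (pathGraph n) (Icc a b) v - degOut (pathGraph n) (Icc a b) v =
      2 * ((min (b : ℕ) (v + 1) - max (a : ℕ) (v - 1) : ℕ) : ℤ) -
        ((min (n - 1) (v + 1) - (v - 1) : ℕ) : ℤ) := by
  have h := degIn_add_degOut (pathGraph n) (Icc a b) v
  rw [degree_pathGraph, degIn_pathGraph_Icc hv] at h
  rw [degIn_pathGraph_Icc hv]
  omega

theorem exactIndex_pathGraph_singleton {n : ℕ} (hn : 2 ≤ n) (a : Fin n) :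
    exactIndex (pathGraph n) {a} = if (a : ℕ) = 0 ∨ (a : ℕ) + 1 = n then -1 else -2 := by
  have ha := a.isLt
  rw [exactIndex, dif_pos (singleton_nonempty a), inf'_singleton, ← Icc_self,
    degIn_sub_degOut_pathGraph_Icc (mem_Icc.mpr ⟨le_rfl, le_rfl⟩)]
  split_ifs <;> omega

theorem exactIndex_pathGraph_Icc_of_lt {n : ℕ} {a b : Fin n} (hab : a < b) :
    exactIndex (pathGraph n) (Icc a b) = if (a : ℕ) = 0 ∧ (b : ℕ) + 1 = n then 1 else 0 := by
  have hab' : (a : ℕ) < b := hab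
  have hb := b.isLt
  rw [exactIndex, dif_pos (nonempty_Icc.mpr hab.le)]
  refine le_antisymm ?_ (le_inf' _ _ fun v hv => ?_)
  · by_cases ha : (a : ℕ) = 0
    · refine (inf'_le _ (right_mem_Icc.mpr hab.le)).trans ?_
      rw [degIn_sub_degOut_pathGraph_Icc (right_mem_Icc.mpr hab.le)]
      split_ifs <;> omega
    · refine (inf'_le _ (left_mem_Icc.mpr hab.le)).trans ?_
      rw [degIn_sub_degOut_pathGraph_Icc (left_mem_Icc.mpr hab.le)]
      split_ifs <;> omega
  · rw [degIn_sub_degOut_pathGraph_Icc hv]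
    rw [mem_Icc, Fin.le_def, Fin.le_def] at hv
    split_ifs <;> omega

theorem Nat.cast_choose_two_sub_one {n : ℕ} (hn : 2 ≤ n) :
    ((n.choose 2 - 1 : ℕ) : ℤ) = ((n : ℤ) - 2) * ((n : ℤ) + 1) / 2 := by
  have h : n.choose 2 * 2 = n * (n - 1) := by
    rw [Nat.choose_two_right, Nat.div_mul_cancel (Nat.even_mul_pred_self n).two_dvd]
  have hpos : 1 ≤ n.choose 2 := Nat.choose_pos hn
  zify [(by omega : 1 ≤ n)] at h
  symm
  apply Int.ediv_eq_of_eq_mul_left two_ne_zero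
  push_cast [Nat.cast_sub hpos]
  linear_combination -h

theorem sum_X_pow_exactIndex_singleton {n : ℕ} (hn : 2 ≤ n) :
    ∑ a : Fin n, (X : ℤ[X]) ^ ((n + exactIndex (pathGraph n) {a}).toNat) =
      2 • X ^ (n - 1) + (n - 2) • X ^ (n - 2) := by
  obtain ⟨m, rfl⟩ := Nat.exists_eq_add_of_le' hn
  have hinner (i : Fin m) :
      ((m + 2 : ℕ) + exactIndex (pathGraph (m + 2)) {i.castSucc.succ}).toNat = m := by
    rw [exactIndex_pathGraph_singleton hn,
      if_neg (by simp only [Fin.val_succ, Fin.val_castSucc]; omega)]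
    omega
  have hend : ((m + 2 : ℕ) + (-1 : ℤ)).toNat = m + 2 - 1 := by omega
  rw [Fin.sum_univ_succ, Fin.sum_univ_castSucc,
    sum_congr rfl fun i _ => congrArg (X ^ ·) (hinner i), exactIndex_pathGraph_singleton hn,
    exactIndex_pathGraph_singleton hn, if_pos (by simp), if_pos (by simp), hend]
  simp only [sum_const, card_univ, Fintype.card_fin, Nat.add_sub_cancel]
  abel

theorem sum_X_pow_exactIndex_Icc_of_lt {n : ℕ} (hn : 2 ≤ n) :
    ∑ p : Fin n × Fin n with p.1 < p.2,
        (X : ℤ[X]) ^ ((n + exactIndex (pathGraph n) (Icc p.1 p.2)).toNat) =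
      X ^ (n + 1) + (n.choose 2 - 1) • X ^ n := by
  set whole : Fin n × Fin n := (⟨0, by omega⟩, ⟨n - 1, by omega⟩)
  have hwhole : whole ∈ ({p : Fin n × Fin n | p.1 < p.2} : Finset _) := by
    simp only [mem_filter, mem_univ, true_and, Fin.lt_def, whole]
    omega
  have hrest : ∀ p ∈ ({p : Fin n × Fin n | p.1 < p.2} : Finset _).erase whole,
      (X : ℤ[X]) ^ ((n + exactIndex (pathGraph n) (Icc p.1 p.2)).toNat) = X ^ n := by
    intro p hp
    obtain ⟨hne, hp⟩ := mem_erase.mp hp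
    rw [exactIndex_pathGraph_Icc_of_lt (mem_filter.mp hp).2, if_neg]
    · simp
    · rintro ⟨h1, h2⟩
      exact hne (Prod.ext (Fin.ext h1) (Fin.ext (show (p.2 : ℕ) = n - 1 by omega)))
  rw [← add_sum_erase _ _ hwhole, sum_congr rfl hrest, sum_const, card_erase_of_mem hwhole,
    ← univ_product_univ, card_product_filter_lt, card_univ, Fintype.card_fin,
    exactIndex_pathGraph_Icc_of_lt (mem_filter.mp hwhole).2,
    if_pos ⟨rfl, Nat.sub_add_cancel (by omega)⟩, show ((n : ℤ) + 1).toNat = n + 1 by omega]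

/-- the alliance polynomial of the path graph `P_n`, `n ≥ 2`. -/
theorem alliancePoly_pathGraph (n : ℕ) (hn : 2 ≤ n) :
    alliancePoly (SimpleGraph.pathGraph n)
      = C ((n : ℤ) - 2) * X ^ (n - 2) + C 2 * X ^ (n - 1)
        + C (((n : ℤ) - 2) * ((n : ℤ) + 1) / 2) * X ^ n + X ^ (n + 1) := by
  rw [alliancePoly, Fintype.card_fin, sum_goodSets_pathGraph, sum_X_pow_exactIndex_singleton hn,
    sum_X_pow_exactIndex_Icc_of_lt hn, ← Nat.cast_choose_two_sub_one hn,
    show (n : ℤ) - 2 = ((n - 2 : ℕ) : ℤ) by omega]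
  simp only [nsmul_eq_mul, map_natCast, map_ofNat, Nat.cast_ofNat]
  ring
end

section
/- The alliance polynomial of the complete graph K_n (n ≥ 1) satisfies x·A(K_n;x) = (x^2 + 1)^n − 1; equivalently A(K_n;x) = Σ_{s=1}^{n} C(n,s) x^{2s−1}. Moreover, if A(Γ;x) = A(K_t;x) for a finite simple graph Γ, then Γ is isomorphic to K_t. -/
open Finset Polynomial
open scoped Classical

noncomputable section

variable {V : Type*} [Fintype V]

set_option linter.unusedSectionVars false

lemma degIn_eq {G : SimpleGraph V} {S t : Finset V} {v : V}
    (H : ∀ u, u ∈ t ↔ u ∈ S ∧ G.Adj v u) : degIn G S v = (t.card : ℤ) := by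
  rw [degIn]
  norm_cast
  congr 1
  ext u
  rw [Finset.mem_filter, H]

lemma degOut_eq {G : SimpleGraph V} {S : Finset V} {t : Finset V} {v : V}
    (H : ∀ u, u ∈ t ↔ u ∉ S ∧ G.Adj v u) : degOut G S v = (t.card : ℤ) := by
  rw [degOut]
  norm_cast
  congr 1
  ext u
  rw [Finset.mem_filter, H, Finset.mem_compl]

lemma induce_connected_of_adj_mem {G : SimpleGraph V} {S : Finset V} {v : V}
    (hv : v ∈ S) (huniv : ∀ u ∈ S, u ≠ v → G.Adj v u) :
    (G.induce (S : Set V)).Connected := by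
  rw [SimpleGraph.connected_iff]
  have key : ∀ a : (S : Set V), (G.induce (S : Set V)).Reachable a ⟨v, hv⟩ := by
    intro a
    by_cases h : (a : V) = v
    · exact (Subtype.ext h : a = ⟨v, hv⟩) ▸ SimpleGraph.Reachable.refl _
    · refine SimpleGraph.Adj.reachable ?_
      have : G.Adj v a := huniv a a.2 h
      exact this.symm
  exact ⟨fun a b => (key a).trans (key b).symm, ⟨⟨v, hv⟩⟩⟩

lemma mem_goodSets {G : SimpleGraph V} {S : Finset V} :
    S ∈ goodSets G ↔ S.Nonempty ∧ (G.induce (S : Set V)).Connected := by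
  simp [goodSets]

lemma singleton_mem_goodSets {G : SimpleGraph V} (v : V) : {v} ∈ goodSets G := by
  refine mem_goodSets.2 ⟨singleton_nonempty v, ?_⟩
  exact induce_connected_of_adj_mem (mem_singleton_self v)
    (fun u hu hne => absurd (mem_singleton.1 hu) hne)

lemma goodSets_top (n : ℕ) :
    goodSets (⊤ : SimpleGraph (Fin n)) = Finset.univ.filter (fun S => S.Nonempty) := by
  ext S
  simp only [mem_goodSets, mem_filter, mem_univ, true_and]
  constructor
  · exact fun h => h.1
  · intro h
    refine ⟨h, ?_⟩
    obtain ⟨v, hv⟩ := h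
    exact induce_connected_of_adj_mem hv (fun u hu hne => hne.symm)

lemma exactIndex_top {n : ℕ} {S : Finset (Fin n)} (hS : S.Nonempty) :
    exactIndex (⊤ : SimpleGraph (Fin n)) S = 2 * S.card - 1 - n := by
  rw [exactIndex, dif_pos hS]
  have hconst : ∀ v ∈ S, degIn (⊤ : SimpleGraph (Fin n)) S v
      - degOut (⊤ : SimpleGraph (Fin n)) S v = 2 * S.card - 1 - n := by
    intro v hv
    have h1 : degIn (⊤ : SimpleGraph (Fin n)) S v = ((S.erase v).card : ℤ) :=
      degIn_eq (fun u => by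
        simp only [Finset.mem_erase, SimpleGraph.top_adj]
        constructor
        · rintro ⟨h, h'⟩; exact ⟨h', Ne.symm h⟩
        · rintro ⟨h, h'⟩; exact ⟨Ne.symm h', h⟩)
    have h2 : degOut (⊤ : SimpleGraph (Fin n)) S v = ((Sᶜ : Finset (Fin n)).card : ℤ) :=
      degOut_eq (fun u => by
        simp only [Finset.mem_compl, SimpleGraph.top_adj]
        exact ⟨fun h => ⟨h, fun he => h (he ▸ hv)⟩, fun h => h.1⟩)
    rw [h1, h2, card_erase_of_mem hv, Finset.card_compl]
    have h3 : 1 ≤ S.card := hS.card_pos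
    have h4 : S.card ≤ Fintype.card (Fin n) := S.card_le_univ
    rw [Fintype.card_fin] at h4 ⊢
    push_cast [Nat.cast_sub h3, Nat.cast_sub h4]
    ring
  rw [Finset.inf'_congr hS rfl hconst]
  exact Finset.inf'_const _ _

lemma expo_top {n : ℕ} {S : Finset (Fin n)} (hS : S.Nonempty) :
    (((Fintype.card (Fin n)) : ℤ) + exactIndex (⊤ : SimpleGraph (Fin n)) S).toNat
      = 2 * S.card - 1 := by
  rw [exactIndex_top hS, Fintype.card_fin]
  have h3 : 1 ≤ S.card := hS.card_pos
  omega

lemma alliancePoly_top (n : ℕ) :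
    alliancePoly (⊤ : SimpleGraph (Fin n))
      = ∑ s ∈ Finset.Icc 1 n, C ((n.choose s : ℕ) : ℤ) * X ^ (2 * s - 1) := by
  rw [alliancePoly, goodSets_top]
  have step1 : ∑ S ∈ Finset.univ.filter (fun S : Finset (Fin n) => S.Nonempty),
        (X : Polynomial ℤ) ^ (((Fintype.card (Fin n) : ℤ)
          + exactIndex (⊤ : SimpleGraph (Fin n)) S).toNat)
      = ∑ S ∈ Finset.univ.filter (fun S : Finset (Fin n) => S.Nonempty),
        (X : Polynomial ℤ) ^ (2 * S.card - 1) := by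
    refine Finset.sum_congr rfl (fun S hS => ?_)
    rw [expo_top (Finset.mem_filter.1 hS).2]
  rw [step1]
  have hmap : ∀ S ∈ Finset.univ.filter (fun S : Finset (Fin n) => S.Nonempty),
      S.card ∈ Finset.Icc 1 n := by
    intro S hS
    rw [Finset.mem_Icc]
    exact ⟨(Finset.mem_filter.1 hS).2.card_pos, by
      simpa using S.card_le_univ⟩
  rw [← Finset.sum_fiberwise_of_maps_to hmap]
  refine Finset.sum_congr rfl (fun s hs => ?_)
  have hfib : (Finset.univ.filter (fun S : Finset (Fin n) => S.Nonempty)).filter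
      (fun S => S.card = s) = Finset.powersetCard s Finset.univ := by
    ext T
    simp only [Finset.mem_filter, Finset.mem_univ, true_and, Finset.mem_powersetCard,
      Finset.subset_univ]
    have h1 : 1 ≤ s := (Finset.mem_Icc.1 hs).1
    constructor
    · exact fun h => h.2
    · exact fun h => ⟨Finset.card_pos.1 (h ▸ h1), h⟩
  have step2 : ∑ S ∈ (Finset.univ.filter (fun S : Finset (Fin n) => S.Nonempty)).filter
        (fun S => S.card = s), (X : Polynomial ℤ) ^ (2 * S.card - 1)
      = ∑ S ∈ (Finset.univ.filter (fun S : Finset (Fin n) => S.Nonempty)).filter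
        (fun S => S.card = s), (X : Polynomial ℤ) ^ (2 * s - 1) := by
    refine Finset.sum_congr rfl (fun S hS => ?_)
    rw [(Finset.mem_filter.1 hS).2]
  rw [step2, Finset.sum_const, hfib, Finset.card_powersetCard, Finset.card_univ,
    Fintype.card_fin, nsmul_eq_mul]
  simp [Polynomial.C_eq_natCast]

lemma binom_expand (n : ℕ) :
    ((X : Polynomial ℤ) ^ 2 + 1) ^ n - 1
      = ∑ s ∈ Finset.Icc 1 n, C ((n.choose s : ℕ) : ℤ) * X ^ (2 * s) := by
  rw [add_pow]
  have hins : Finset.range (n + 1) = insert 0 (Finset.Icc 1 n) := by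
    ext k; simp [Finset.mem_Icc, Nat.lt_succ_iff]; omega
  rw [hins, Finset.sum_insert (by simp)]
  simp only [pow_zero, one_pow, one_mul, Nat.choose_zero_right, Nat.cast_one, mul_one]
  rw [add_sub_cancel_left]
  refine Finset.sum_congr rfl (fun s hs => ?_)
  rw [pow_mul, Polynomial.C_eq_natCast, mul_comm]

lemma coeff_alliancePoly (G : SimpleGraph V) (k : ℕ) :
    (alliancePoly G).coeff k
      = (((goodSets G).filter
          (fun S => ((Fintype.card V : ℤ) + exactIndex G S).toNat = k)).card : ℤ) := by
  rw [alliancePoly, Polynomial.finset_sum_coeff]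
  simp only [Polynomial.coeff_X_pow]
  rw [Finset.sum_boole]
  norm_cast
  apply congrArg
  apply Finset.filter_congr
  intro S _
  simp [eq_comm]

lemma eval_one_alliancePoly (G : SimpleGraph V) :
    (alliancePoly G).eval 1 = ((goodSets G).card : ℤ) := by
  rw [alliancePoly, Polynomial.eval_finset_sum]
  simp

lemma card_goodSets_top (t : ℕ) :
    (goodSets (⊤ : SimpleGraph (Fin t))).card = 2 ^ t - 1 := by
  rw [goodSets_top]
  have h : Finset.univ.filter (fun S : Finset (Fin t) => S.Nonempty)
      = Finset.univ.erase ∅ := by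
    ext S
    simp [Finset.nonempty_iff_ne_empty]
  rw [h, Finset.card_erase_of_mem (Finset.mem_univ _), Finset.card_univ,
    Fintype.card_finset, Fintype.card_fin]

lemma exactIndex_ge {G : SimpleGraph V} {S : Finset V} (hS : S.Nonempty) :
    (S.card : ℤ) - Fintype.card V ≤ exactIndex G S := by
  rw [exactIndex, dif_pos hS]
  refine Finset.le_inf' hS _ (fun v hv => ?_)
  have h1 : (0 : ℤ) ≤ degIn G S v := Int.natCast_nonneg _
  have h2 : degOut G S v ≤ (Fintype.card V : ℤ) - S.card := by
    rw [degOut]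
    have h3 := Finset.card_le_card (Finset.filter_subset (fun u => G.Adj v u) Sᶜ)
    have h4 : (Sᶜ : Finset V).card = Fintype.card V - S.card := by
      rw [Finset.card_compl]
    have h5 : S.card ≤ Fintype.card V := by simpa using S.card_le_univ
    rw [h4] at h3
    have := Nat.cast_le (α := ℤ) |>.2 h3
    rw [Nat.cast_sub h5] at this
    exact this
  linarith

lemma exactIndex_singleton (G : SimpleGraph V) (v : V) :
    exactIndex G {v} = -(G.degree v : ℤ) := by
  rw [exactIndex, dif_pos (Finset.singleton_nonempty v), Finset.inf'_singleton]
  have h1 : degIn G {v} v = ((∅ : Finset V).card : ℤ) :=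
    degIn_eq (fun u => by
      simp only [Finset.notMem_empty, Finset.mem_singleton, false_iff]
      rintro ⟨rfl, h⟩
      exact G.irrefl h)
  have h2 : degOut G {v} v = ((G.neighborFinset v).card : ℤ) :=
    degOut_eq (fun u => by
      simp only [SimpleGraph.mem_neighborFinset, Finset.mem_singleton]
      exact ⟨fun h => ⟨h.ne', h⟩, fun h => h.2⟩)
  rw [h1, h2, SimpleGraph.card_neighborFinset_eq_degree]
  simp

lemma xmul_alliancePoly_top (n : ℕ) :
    X * alliancePoly (⊤ : SimpleGraph (Fin n)) = ((X : Polynomial ℤ) ^ 2 + 1) ^ n - 1 := by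
  rw [alliancePoly_top, binom_expand, Finset.mul_sum]
  refine Finset.sum_congr rfl (fun s hs => ?_)
  have h1 : 1 ≤ s := (Finset.mem_Icc.1 hs).1
  rw [mul_left_comm]
  congr 1
  rw [← pow_succ']
  congr 1
  omega

lemma coeff_one_top (t : ℕ) :
    (alliancePoly (⊤ : SimpleGraph (Fin t))).coeff 1 = t := by
  rw [alliancePoly_top, Polynomial.finset_sum_coeff]
  simp only [Polynomial.coeff_C_mul, Polynomial.coeff_X_pow]
  rw [Finset.sum_eq_single 1]
  · simp
  · intro s hs hne
    have h1 : 1 ≤ s := (Finset.mem_Icc.1 hs).1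
    have h2 : ¬(1 = 2 * s - 1) := by omega
    simp [h2]
  · intro h
    have ht : t = 0 := by
      by_contra ht
      exact h (Finset.mem_Icc.2 ⟨le_refl 1, Nat.pos_of_ne_zero ht⟩)
    simp [ht]

lemma alliance_char {V : Type*} [Fintype V] (G : SimpleGraph V) (t : ℕ)
    (hA : alliancePoly G = alliancePoly (⊤ : SimpleGraph (Fin t))) :
    Nonempty (G ≃g (⊤ : SimpleGraph (Fin t))) := by
  have h1 : (goodSets G).card = 2 ^ t - 1 := by
    have h := congrArg (Polynomial.eval 1) hA
    rw [eval_one_alliancePoly, eval_one_alliancePoly, card_goodSets_top] at h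
    exact_mod_cast h
  -- U : set of "universal" vertices
  have hUcard : (Finset.univ.filter
      (fun v : V => G.degree v + 1 = Fintype.card V)).card = t := by
    have hco : ((((goodSets G).filter
        (fun S => ((Fintype.card V : ℤ) + exactIndex G S).toNat = 1)).card : ℤ)) = t := by
      rw [← coeff_alliancePoly, hA, coeff_one_top]
    have himg : (goodSets G).filter
        (fun S => ((Fintype.card V : ℤ) + exactIndex G S).toNat = 1)
        = (Finset.univ.filter (fun v : V => G.degree v + 1 = Fintype.card V)).image
          (fun v => {v}) := by
      ext S
      simp only [Finset.mem_filter, Finset.mem_image, mem_goodSets, Finset.mem_univ, true_and]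
      constructor
      · rintro ⟨⟨hne, hconn⟩, hexp⟩
        have hge := exactIndex_ge (G := G) hne
        have hpos := hne.card_pos
        have hle : S.card = 1 := by omega
        obtain ⟨v, rfl⟩ := Finset.card_eq_one.1 hle
        refine ⟨v, ?_, rfl⟩
        have hdeg := G.degree_lt_card_verts v
        rw [exactIndex_singleton] at hexp
        omega
      · rintro ⟨v, hv, rfl⟩
        have hdeg := G.degree_lt_card_verts v
        refine ⟨(mem_goodSets.1 (singleton_mem_goodSets v)), ?_⟩
        rw [exactIndex_singleton]
        omega
    rw [himg, Finset.card_image_of_injective _ Finset.singleton_injective] at hco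
    exact_mod_cast hco
  have hUadj : ∀ v ∈ Finset.univ.filter (fun v : V => G.degree v + 1 = Fintype.card V),
      ∀ u, u ≠ v → G.Adj v u := by
    intro v hv u hu
    have hdeg : G.degree v + 1 = Fintype.card V := (Finset.mem_filter.1 hv).2
    have hsub : G.neighborFinset v ⊆ Finset.univ.erase v := by
      intro u' hu'
      rw [SimpleGraph.mem_neighborFinset] at hu'
      rw [Finset.mem_erase]
      exact ⟨hu'.ne', Finset.mem_univ _⟩
    have heq : G.neighborFinset v = Finset.univ.erase v := by
      apply Finset.eq_of_subset_of_card_le hsub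
      rw [Finset.card_erase_of_mem (Finset.mem_univ v), Finset.card_univ,
        SimpleGraph.card_neighborFinset_eq_degree]
      omega
    have hmem : u ∈ G.neighborFinset v := by
      rw [heq, Finset.mem_erase]; exact ⟨hu, Finset.mem_univ _⟩
    rw [SimpleGraph.mem_neighborFinset] at hmem
    exact hmem
  have htm : Fintype.card V = t := by
    have htle : t ≤ Fintype.card V := by
      calc t = _ := hUcard.symm
      _ ≤ (Finset.univ : Finset V).card := Finset.card_le_card (Finset.filter_subset _ _)
      _ = Fintype.card V := Finset.card_univ
    by_cases h0 : t = 0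
    · subst h0
      have himg2 : Finset.univ.image (fun v : V => ({v} : Finset V)) ⊆ goodSets G := by
        intro S hS
        obtain ⟨v, -, rfl⟩ := Finset.mem_image.1 hS
        exact singleton_mem_goodSets v
      have hc := Finset.card_le_card himg2
      rw [Finset.card_image_of_injective _ Finset.singleton_injective, Finset.card_univ] at hc
      rw [pow_zero] at h1
      omega
    · have ht1 : 1 ≤ t := Nat.pos_of_ne_zero h0
      have hT : Finset.univ.filter (fun S : Finset V =>
          (S ∩ Finset.univ.filter (fun v : V => G.degree v + 1 = Fintype.card V)).Nonempty)
          ⊆ goodSets G := by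
        intro S hS
        rw [Finset.mem_filter] at hS
        obtain ⟨v, hv⟩ := hS.2
        rw [Finset.mem_inter] at hv
        exact mem_goodSets.2 ⟨⟨v, hv.1⟩,
          induce_connected_of_adj_mem hv.1 (fun u hu hne => hUadj v hv.2 u hne)⟩
      have hneg : (Finset.univ.filter (fun S : Finset V =>
          ¬ (S ∩ Finset.univ.filter (fun v : V => G.degree v + 1 = Fintype.card V)).Nonempty))
          = ((Finset.univ.filter (fun v : V => G.degree v + 1 = Fintype.card V))ᶜ).powerset := by
        ext S
        simp only [Finset.mem_filter, Finset.mem_univ, true_and, Finset.mem_powerset,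
          Finset.not_nonempty_iff_eq_empty]
        constructor
        · intro h x hx
          rw [Finset.mem_compl]
          intro hxU
          have hmem : x ∈ S ∩ _ := Finset.mem_inter.2 ⟨hx, hxU⟩
          rw [h] at hmem
          exact absurd hmem (Finset.notMem_empty x)
        · intro h
          refine Finset.eq_empty_iff_forall_notMem.2 (fun x hx => ?_)
          rw [Finset.mem_inter] at hx
          have := h hx.1
          rw [Finset.mem_compl] at this
          exact this hx.2
      have hsplit := Finset.card_filter_add_card_filter_not
        (s := (Finset.univ : Finset (Finset V)))
        (p := fun S : Finset V =>
          (S ∩ Finset.univ.filter (fun v : V => G.degree v + 1 = Fintype.card V)).Nonempty)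
      rw [hneg, Finset.card_powerset, Finset.card_compl, hUcard, Finset.card_univ,
        Fintype.card_finset] at hsplit
      have hle2 := Finset.card_le_card hT
      rw [h1] at hle2
      -- arithmetic: conclude Fintype.card V = t
      by_contra hne
      have ha : 1 ≤ Fintype.card V - t := by omega
      have e1 : 2 ^ Fintype.card V = 2 ^ (Fintype.card V - t) * 2 ^ t := by
        rw [← pow_add]; congr 1; omega
      have e2 : 2 ≤ 2 ^ (Fintype.card V - t) := by
        calc 2 = 2 ^ 1 := (pow_one 2).symm
        _ ≤ 2 ^ (Fintype.card V - t) := Nat.pow_le_pow_right (by norm_num) ha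
      have e3 : 2 ≤ 2 ^ t := by
        calc 2 = 2 ^ 1 := (pow_one 2).symm
        _ ≤ 2 ^ t := Nat.pow_le_pow_right (by norm_num) ht1
      have e4 : 2 ^ (Fintype.card V - t) * (2 ^ t - 1) + 2 ^ (Fintype.card V - t)
          = 2 ^ (Fintype.card V - t) * 2 ^ t := by
        rw [← Nat.mul_succ]
        congr 1
        omega
      have e5 : 2 * (2 ^ t - 1) ≤ 2 ^ (Fintype.card V - t) * (2 ^ t - 1) :=
        Nat.mul_le_mul_right _ e2
      omega
  have hUuniv : Finset.univ.filter (fun v : V => G.degree v + 1 = Fintype.card V)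
      = Finset.univ :=
    Finset.eq_univ_of_card _ (by rw [hUcard, htm])
  have hGtop : G = (⊤ : SimpleGraph V) := by
    ext v u
    simp only [SimpleGraph.top_adj]
    constructor
    · exact fun h => h.ne
    · intro h
      exact hUadj v (by rw [hUuniv]; exact Finset.mem_univ v) u (Ne.symm h)
  have e : V ≃ Fin t := Fintype.equivFinOfCardEq htm
  refine ⟨?_⟩
  rw [hGtop]
  exact SimpleGraph.Iso.completeGraph e

end

/-- the alliance polynomial of the complete graph `K_n`, and
complete graphs are characterized by their alliance polynomials. -/
theorem alliancePoly_completeGraph (n : ℕ) (hn : 1 ≤ n) {V : Type*} [Fintype V]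
    (G : SimpleGraph V) :
    X * alliancePoly (⊤ : SimpleGraph (Fin n)) = (X ^ 2 + 1) ^ n - 1 ∧
    alliancePoly (⊤ : SimpleGraph (Fin n))
      = ∑ s ∈ Finset.Icc 1 n, C ((n.choose s : ℕ) : ℤ) * X ^ (2 * s - 1) ∧
    (∀ t : ℕ, alliancePoly G = alliancePoly (⊤ : SimpleGraph (Fin t)) →
      Nonempty (G ≃g (⊤ : SimpleGraph (Fin t)))) := by
  exact ⟨xmul_alliancePoly_top n, alliancePoly_top n, fun t hA => alliance_char G t hA⟩
end
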